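/- Let G be a group, H ≤ G, A a finite set, and 𝒫 a set of patterns with supports in H defining subshifts X ⊆ A^H and Y ⊆ A^G. Then for every y ∈ Y there exists x ∈ X such that Stab(y) ∩ H ⊆ Stab(x), where stabilizers are taken for the respective shift actions. In particular, if every point of X has trivial stabilizer in H, then every y ∈ Y satisfies Stab(y) ∩ H = {1}. -/

import Mathlib

/-!
A configuration `y : G → A` avoiding every `G`-translate of the patterns restricts to a
configuration `y|_H` avoiding every `H`-translate of them, and restriction to `H` commutes
with the shift by elements of `H`; so `y|_H` is the required point of `X`.
-/

/-- A pattern: a finitely supported partial function, encoded by its finite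
support and values. -/
structure Pattern (G A : Type*) where
  supp : Finset G
  val : G → A

namespace Pattern

variable {G A : Type*} [Group G]

def subshift (Pats : Set (Pattern G A)) : Set (G → A) :=
  {x | ∀ g : G, ∀ P ∈ Pats, ∃ p ∈ P.supp, x (g⁻¹ * p) ≠ P.val p}

def inducedSubshift (H : Subgroup G) (Pats : Set (Pattern H A)) : Set (G → A) :=
  {y | ∀ g : G, ∀ P ∈ Pats, ∃ p ∈ P.supp, y (g⁻¹ * (p : G)) ≠ P.val p}

end Pattern

section Shift

variable {G A : Type*} [Group G]

def shiftConfig (g : G) (x : G → A) : G → A := fun k => x (g⁻¹ * k)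

def Subgroup.restrictConfig (H : Subgroup G) (y : G → A) : H → A := fun p => y p

theorem Subgroup.restrictConfig_shiftConfig (H : Subgroup G) (h : H) (y : G → A) :
    H.restrictConfig (shiftConfig (h : G) y) = shiftConfig h (H.restrictConfig y) := by
  funext p
  simp [Subgroup.restrictConfig, shiftConfig]

theorem Subgroup.shiftConfig_restrictConfig_eq_of_shiftConfig_eq {H : Subgroup G} {h : H}
    {y : G → A} (hy : shiftConfig (h : G) y = y) :
    shiftConfig h (H.restrictConfig y) = H.restrictConfig y := by
  rw [← H.restrictConfig_shiftConfig, hy]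

theorem Subgroup.restrictConfig_mem_subshift {H : Subgroup G} {Pats : Set (Pattern H A)}
    {y : G → A} (hy : y ∈ Pattern.inducedSubshift H Pats) :
    H.restrictConfig y ∈ Pattern.subshift Pats := by
  intro h P hP
  obtain ⟨p, hp, hne⟩ := hy h P hP
  exact ⟨p, hp, by simpa [Subgroup.restrictConfig] using hne⟩

end Shift

theorem stmt_18_general {G A : Type*} [Group G] (H : Subgroup G)
    (Pats : Set (Pattern H A)) :
    (∀ y ∈ {y' : G → A | ∀ g : G, ∀ P ∈ Pats,
        ∃ p ∈ P.supp, y' (g⁻¹ * (p : G)) ≠ P.val p},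
      ∃ x ∈ {z : H → A | ∀ h : H, ∀ P ∈ Pats,
        ∃ p ∈ P.supp, z (h⁻¹ * p) ≠ P.val p},
      ∀ h : H, (fun g => y ((h : G)⁻¹ * g)) = y →
        (fun p => x (h⁻¹ * p)) = x) ∧
    ((∀ x ∈ {z : H → A | ∀ h : H, ∀ P ∈ Pats,
        ∃ p ∈ P.supp, z (h⁻¹ * p) ≠ P.val p},
        ∀ h : H, (fun p => x (h⁻¹ * p)) = x → h = 1) →
      ∀ y ∈ {y' : G → A | ∀ g : G, ∀ P ∈ Pats,
        ∃ p ∈ P.supp, y' (g⁻¹ * (p : G)) ≠ P.val p},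
        ∀ h : H, (fun g => y ((h : G)⁻¹ * g)) = y → h = 1) := by
  refine ⟨fun y hy => ?_, fun hX y hy h hyh => ?_⟩
  · exact ⟨H.restrictConfig y, Subgroup.restrictConfig_mem_subshift hy,
      fun h => Subgroup.shiftConfig_restrictConfig_eq_of_shiftConfig_eq⟩
  · exact hX _ (Subgroup.restrictConfig_mem_subshift hy) h
      (Subgroup.shiftConfig_restrictConfig_eq_of_shiftConfig_eq hyh)

/-- For every y in the G-subshift Y there is x in the H-subshift X with
Stab(y) ∩ H ⊆ Stab(x); in particular if every point of X has trivial
stabilizer then Stab(y) ∩ H is trivial for every y ∈ Y. -/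
theorem stmt_18 {G A : Type*} [Group G] [Finite A] (H : Subgroup G)
    (Pats : Set (Pattern H A)) :
    (∀ y ∈ {y' : G → A | ∀ g : G, ∀ P ∈ Pats,
        ∃ p ∈ P.supp, y' (g⁻¹ * (p : G)) ≠ P.val p},
      ∃ x ∈ {z : H → A | ∀ h : H, ∀ P ∈ Pats,
        ∃ p ∈ P.supp, z (h⁻¹ * p) ≠ P.val p},
      ∀ h : H, (fun g => y ((h : G)⁻¹ * g)) = y →
        (fun p => x (h⁻¹ * p)) = x) ∧
    ((∀ x ∈ {z : H → A | ∀ h : H, ∀ P ∈ Pats,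
        ∃ p ∈ P.supp, z (h⁻¹ * p) ≠ P.val p},
        ∀ h : H, (fun p => x (h⁻¹ * p)) = x → h = 1) →
      ∀ y ∈ {y' : G → A | ∀ g : G, ∀ P ∈ Pats,
        ∃ p ∈ P.supp, y' (g⁻¹ * (p : G)) ≠ P.val p},
        ∀ h : H, (fun g => y ((h : G)⁻¹ * g)) = y → h = 1) :=
  stmt_18_general H Pats
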